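/- arXiv:1905.07678 — 5 statements merged into one kernel-verified Lean document; each statement's English description precedes it below -/
import Mathlib

section
/- Let a, b, a', b' be nonnegative reals and z, z' complex numbers with |z| ≤ √(a b) and |z'| ≤ √(a' b'). If |z + z'| = √((a+a')(b+b')), then there exists λ ≥ 0 such that (a', b', z') = λ·(a, b, z) or (a, b, z) = λ·(a', b', z'). -/
/-!
The chain `‖z + z'‖ ≤ ‖z‖ + ‖z'‖ ≤ √(ab) + √(a'b') ≤ √((a+a')(b+b'))` is tight, so every step is an
equality. The defect of the last step is measured by Lagrange's identity
`(√(ab) + √(a'b'))² + (√(ab') - √(a'b))² = (a+a')(b+b')`, so `ab' = a'b`, i.e. `(a', b') = l (a, b)`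
with `l = (a'+b')/(a+b)`. Then `‖z'‖ = l ‖z‖`, and equality in the triangle inequality puts `z` and
`z'` on a common ray, which forces `z' = l z`.
-/

namespace Real

theorem sqrt_mul_add_sqrt_mul_sq_add_sq_sub {a b a' b' : ℝ}
    (ha : 0 ≤ a) (hb : 0 ≤ b) (ha' : 0 ≤ a') (hb' : 0 ≤ b') :
    (√(a * b) + √(a' * b')) ^ 2 + (√(a * b') - √(a' * b)) ^ 2 = (a + a') * (b + b') := by
  rw [sqrt_mul ha, sqrt_mul ha', sqrt_mul ha, sqrt_mul ha']
  ring_nf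
  rw [sq_sqrt ha, sq_sqrt hb, sq_sqrt ha', sq_sqrt hb']
  ring

theorem sqrt_mul_add_sqrt_mul_le {a b a' b' : ℝ}
    (ha : 0 ≤ a) (hb : 0 ≤ b) (ha' : 0 ≤ a') (hb' : 0 ≤ b') :
    √(a * b) + √(a' * b') ≤ √((a + a') * (b + b')) := by
  refine le_sqrt_of_sq_le ?_
  rw [← sqrt_mul_add_sqrt_mul_sq_add_sq_sub ha hb ha' hb']
  exact le_add_of_nonneg_right (sq_nonneg _)

theorem mul_eq_mul_of_sqrt_mul_add_sqrt_mul_eq {a b a' b' : ℝ}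
    (ha : 0 ≤ a) (hb : 0 ≤ b) (ha' : 0 ≤ a') (hb' : 0 ≤ b')
    (h : √(a * b) + √(a' * b') = √((a + a') * (b + b'))) :
    a * b' = a' * b := by
  have hsq := sqrt_mul_add_sqrt_mul_sq_add_sq_sub ha hb ha' hb'
  rwa [h, sq_sqrt (mul_nonneg (add_nonneg ha ha') (add_nonneg hb hb')), add_eq_left,
    sq_eq_zero_iff, sub_eq_zero, sqrt_inj (mul_nonneg ha hb') (mul_nonneg ha' hb)] at hsq

end Real

theorem eq_mul_and_eq_mul_of_mul_eq_mul {a b a' b' : ℝ} (h : a * b' = a' * b) (hab : 0 < a + b) :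
    a' = (a' + b') / (a + b) * a ∧ b' = (a' + b') / (a + b) * b := by
  constructor <;> field_simp <;> linarith

theorem SameRay.eq_smul_of_norm_eq_mul {E : Type*} [NormedAddCommGroup E] [NormedSpace ℝ E]
    {x y : E} {l : ℝ} (h : SameRay ℝ x y) (hl : ‖y‖ = l * ‖x‖) : y = l • x := by
  rcases eq_or_ne x 0 with rfl | hx
  · simpa using hl
  · have := h.norm_smul_eq
    rw [hl, mul_smul, smul_comm] at this
    exact smul_right_injective E (norm_ne_zero_iff.2 hx) this

theorem cauchy_schwarz_rigidity (a b a' b' : ℝ) (z z' : ℂ)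
    (ha : 0 ≤ a) (hb : 0 ≤ b) (ha' : 0 ≤ a') (hb' : 0 ≤ b')
    (hz : ‖z‖ ≤ Real.sqrt (a * b))
    (hz' : ‖z'‖ ≤ Real.sqrt (a' * b'))
    (heq : ‖z + z'‖ = Real.sqrt ((a + a') * (b + b'))) :
    ∃ l : ℝ, 0 ≤ l ∧
      ((a' = l * a ∧ b' = l * b ∧ z' = (l : ℂ) * z) ∨
       (a = l * a' ∧ b = l * b' ∧ z = (l : ℂ) * z')) := by
  have hcs := Real.sqrt_mul_add_sqrt_mul_le ha hb ha' hb'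
  have htri := norm_add_le z z'
  have hnz : ‖z‖ = √(a * b) := by linarith
  have hnz' : ‖z'‖ = √(a' * b') := by linarith
  have hray : SameRay ℝ z z' := sameRay_iff_norm_add.2 (by linarith)
  have hcross := Real.mul_eq_mul_of_sqrt_mul_add_sqrt_mul_eq ha hb ha' hb' (by linarith)
  rcases (add_nonneg ha hb).eq_or_lt with hab | hab
  · obtain ⟨rfl, rfl⟩ : a = 0 ∧ b = 0 := by constructor <;> linarith
    exact ⟨0, le_rfl, Or.inr ⟨by simp, by simp, by simpa using hnz⟩⟩
  · obtain ⟨ha'l, hb'l⟩ := eq_mul_and_eq_mul_of_mul_eq_mul hcross hab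
    set l := (a' + b') / (a + b)
    have hl : 0 ≤ l := div_nonneg (add_nonneg ha' hb') hab.le
    refine ⟨l, hl, Or.inl ⟨ha'l, hb'l, ?_⟩⟩
    rw [← Complex.real_smul]
    refine hray.eq_smul_of_norm_eq_mul ?_
    have hprod : a' * b' = (l * l) * (a * b) := by linear_combination b' * ha'l + l * a * hb'l
    rw [hnz', hnz, hprod, Real.sqrt_mul (mul_self_nonneg l), Real.sqrt_mul_self hl]
end

section
/- Let s, t ∈ ℝ⁴ with nonnegative entries and u ∈ ℂ⁴. Suppose √(s₁t₁) + √(s₄t₄) ≥ |u₁| + |u₄| and √(s₂t₂) + √(s₃t₃) ≥ |u₂| + |u₃|. Let a, b ∈ ℝ⁴ with nonnegative entries and z ∈ ℂ⁴ satisfy min{√(a₁b₁), √(a₄b₄)} ≥ max{|z₁|, |z₄|} and min{√(a₂b₂), √(a₃b₃)} ≥ max{|z₂|, |z₃|}. Then Σᵢ (sᵢaᵢ + tᵢbᵢ + 2 Re(uᵢzᵢ)) ≥ 0. -/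
/-!
Bound each summand from below using `Re (u z) ≥ -‖u‖‖z‖` and AM-GM,
`s a + t b ≥ 2 √(st) √(ab)`. It then suffices that, on each block `{1,4}` and `{2,3}`,
`‖uᵢ‖‖zᵢ‖ + ‖uⱼ‖‖zⱼ‖ ≤ √(sᵢtᵢ)√(aᵢbᵢ) + √(sⱼtⱼ)√(aⱼbⱼ)`; this follows by bounding both
`‖zᵢ‖, ‖zⱼ‖` by their maximum `m`, then `‖uᵢ‖ + ‖uⱼ‖` by the witness inequality, and finally
`m` by both `√(aᵢbᵢ)` and `√(aⱼbⱼ)`.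
-/

lemma mul_add_mul_le_of_add_le_of_max_le_min {α : Type*} [Semiring α] [LinearOrder α]
    [IsOrderedRing α] {p q c d x y z w : α} (hp : 0 ≤ p) (hq : 0 ≤ q) (hx : 0 ≤ x) (hy : 0 ≤ y)
    (hz : 0 ≤ z) (h₁ : x + y ≤ p + q) (h₂ : max z w ≤ min c d) :
    x * z + y * w ≤ p * c + q * d :=
  calc x * z + y * w ≤ x * max z w + y * max z w := by
        gcongr
        exacts [le_max_left z w, le_max_right z w]
    _ = (x + y) * max z w := (add_mul x y _).symm
    _ ≤ (p + q) * max z w := by gcongr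
    _ = p * max z w + q * max z w := add_mul p q _
    _ ≤ p * c + q * d := by
        gcongr
        exacts [h₂.trans (min_le_left c d), h₂.trans (min_le_right c d)]

lemma two_mul_sqrt_mul_sqrt_le {s t a b : ℝ} (hs : 0 ≤ s) (ht : 0 ≤ t) (ha : 0 ≤ a)
    (hb : 0 ≤ b) : 2 * (√(s * t) * √(a * b)) ≤ s * a + t * b := by
  have h : √(s * t) * √(a * b) = √(s * a) * √(t * b) := by
    rw [← Real.sqrt_mul (mul_nonneg hs ht), ← Real.sqrt_mul (mul_nonneg hs ha)]
    ring_nf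
  have := two_mul_le_add_sq √(s * a) √(t * b)
  rw [Real.sq_sqrt (mul_nonneg hs ha), Real.sq_sqrt (mul_nonneg ht hb)] at this
  linarith

lemma neg_norm_mul_norm_le_re_mul (u z : ℂ) : -(‖u‖ * ‖z‖) ≤ (u * z).re := by
  rw [← norm_mul]
  exact (abs_le.1 (Complex.abs_re_le_norm _)).1

lemma two_mul_sub_le_add_re_mul {s t a b : ℝ} (hs : 0 ≤ s) (ht : 0 ≤ t) (ha : 0 ≤ a)
    (hb : 0 ≤ b) (u z : ℂ) :
    2 * (√(s * t) * √(a * b) - ‖u‖ * ‖z‖) ≤ s * a + t * b + 2 * (u * z).re := by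
  linarith [two_mul_sqrt_mul_sqrt_le hs ht ha hb, neg_norm_mul_norm_le_re_mul u z]

lemma add_re_mul_add_nonneg_of_block {ι : Type*} {s t a b : ι → ℝ} {u z : ι → ℂ}
    (hs : ∀ i, 0 ≤ s i) (ht : ∀ i, 0 ≤ t i) (ha : ∀ i, 0 ≤ a i) (hb : ∀ i, 0 ≤ b i) {i j : ι}
    (hW : ‖u i‖ + ‖u j‖ ≤ √(s i * t i) + √(s j * t j))
    (hS : max ‖z i‖ ‖z j‖ ≤ min √(a i * b i) √(a j * b j)) :
    0 ≤ (s i * a i + t i * b i + 2 * (u i * z i).re)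
      + (s j * a j + t j * b j + 2 * (u j * z j).re) := by
  have hblock := mul_add_mul_le_of_add_le_of_max_le_min (Real.sqrt_nonneg _)
    (Real.sqrt_nonneg _) (norm_nonneg _) (norm_nonneg _) (norm_nonneg _) hW hS
  linarith [two_mul_sub_le_add_re_mul (hs i) (ht i) (ha i) (hb i) (u i) (z i),
    two_mul_sub_le_add_re_mul (hs j) (ht j) (ha j) (hb j) (u j) (z j)]

theorem pairing_nonneg_A (s t a b : Fin 4 → ℝ) (u z : Fin 4 → ℂ)
    (hs : ∀ i, 0 ≤ s i) (ht : ∀ i, 0 ≤ t i)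
    (ha : ∀ i, 0 ≤ a i) (hb : ∀ i, 0 ≤ b i)
    (hW14 : Real.sqrt (s 0 * t 0) + Real.sqrt (s 3 * t 3) ≥
      ‖u 0‖ + ‖u 3‖)
    (hW23 : Real.sqrt (s 1 * t 1) + Real.sqrt (s 2 * t 2) ≥
      ‖u 1‖ + ‖u 2‖)
    (hS14 : min (Real.sqrt (a 0 * b 0)) (Real.sqrt (a 3 * b 3)) ≥
      max (‖z 0‖) (‖z 3‖))
    (hS23 : min (Real.sqrt (a 1 * b 1)) (Real.sqrt (a 2 * b 2)) ≥
      max (‖z 1‖) (‖z 2‖)) :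
    0 ≤ ∑ i, (s i * a i + t i * b i + 2 * (u i * z i).re) := by
  rw [Fin.sum_univ_four]
  linarith [add_re_mul_add_nonneg_of_block hs ht ha hb hW14 hS14,
    add_re_mul_add_nonneg_of_block hs ht ha hb hW23 hS23]
end

section
/- Let s, t ∈ ℝ⁴ be nonnegative and u ∈ ℂ⁴ satisfy Σᵢ √(sᵢtᵢ) ≥ Σᵢ |uᵢ|. Let a, b ∈ ℝ⁴ be nonnegative and z ∈ ℂ⁴ satisfy min{√(aᵢbᵢ), √(aⱼbⱼ)} ≥ max{|zᵢ|, |zⱼ|} for all i ≠ j in {1,2,3,4}. Then Σᵢ (sᵢaᵢ + tᵢbᵢ + 2 Re(uᵢ zᵢ)) ≥ 0. -/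
open Finset

/- Put `M := maxᵢ ‖zᵢ‖`. The PPT conditions say every `|zᵢ|` is at most every `√(aⱼbⱼ)`, so
`‖zᵢ‖ ≤ M ≤ √(aᵢbᵢ)` for all `i`. By AM-GM each term is at least
`2√(sᵢtᵢ)√(aᵢbᵢ) - 2‖uᵢ‖‖zᵢ‖ ≥ 2M(√(sᵢtᵢ) - ‖uᵢ‖)`, and these bounds sum to
`2M(Σ√(sᵢtᵢ) - Σ‖uᵢ‖) ≥ 0` by the witness inequality. -/

theorem le_of_pairwise_max_le_min {ι α : Type*} [Nontrivial ι] [LinearOrder α] {f g : ι → α}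
    (h : ∀ i j, i ≠ j → max (f i) (f j) ≤ min (g i) (g j)) (i j : ι) : f i ≤ g j := by
  by_cases hij : i = j
  · subst hij
    obtain ⟨k, hk⟩ := exists_ne i
    exact (le_max_left _ _).trans ((h i k hk.symm).trans (min_le_left _ _))
  · exact (le_max_left _ _).trans ((h i j hij).trans (min_le_right _ _))

theorem exists_forall_le_and_forall_ge {ι α : Type*} [Fintype ι] [Nonempty ι] [LinearOrder α]
    {f g : ι → α} (h : ∀ i j, f i ≤ g j) : ∃ M, (∀ i, f i ≤ M) ∧ ∀ j, M ≤ g j :=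
  ⟨univ.sup' univ_nonempty f, fun i => le_sup' f (mem_univ i),
    fun j => sup'_le _ _ fun i _ => h i j⟩

theorem two_mul_sqrt_mul_sqrt_le_add {s t a b : ℝ} (hs : 0 ≤ s) (ht : 0 ≤ t) (ha : 0 ≤ a)
    (hb : 0 ≤ b) : 2 * √(s * t) * √(a * b) ≤ s * a + t * b := by
  have hsplit : √(s * t) * √(a * b) = √(s * a) * √(t * b) := by
    rw [← Real.sqrt_mul (mul_nonneg hs ht), ← Real.sqrt_mul (mul_nonneg hs ha)]
    ring_nf
  calc 2 * √(s * t) * √(a * b) = 2 * √(s * a) * √(t * b) := by rw [mul_assoc, hsplit, mul_assoc]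
    _ ≤ √(s * a) ^ 2 + √(t * b) ^ 2 := two_mul_le_add_sq _ _
    _ = s * a + t * b := by
      rw [Real.sq_sqrt (mul_nonneg hs ha), Real.sq_sqrt (mul_nonneg ht hb)]

theorem mul_sub_norm_le_pairing {s t a b M : ℝ} {u z : ℂ} (hs : 0 ≤ s) (ht : 0 ≤ t)
    (ha : 0 ≤ a) (hb : 0 ≤ b) (hzM : ‖z‖ ≤ M) (hM : M ≤ √(a * b)) :
    2 * M * (√(s * t) - ‖u‖) ≤ s * a + t * b + 2 * (u * z).re := by
  have hM0 : 0 ≤ M := (norm_nonneg z).trans hzM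
  have hdiag : 2 * M * √(s * t) ≤ s * a + t * b :=
    calc 2 * M * √(s * t) ≤ 2 * √(s * t) * √(a * b) := by
          rw [mul_right_comm]; gcongr
      _ ≤ s * a + t * b := two_mul_sqrt_mul_sqrt_le_add hs ht ha hb
  have hoff : -(‖u‖ * M) ≤ (u * z).re :=
    calc -(‖u‖ * M) ≤ -‖u * z‖ := by rw [norm_mul]; gcongr
      _ ≤ (u * z).re := neg_le_of_abs_le (Complex.abs_re_le_norm _)
  linarith

theorem pairing_nonneg_W3 (s t a b : Fin 4 → ℝ) (u z : Fin 4 → ℂ)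
    (hs : ∀ i, 0 ≤ s i) (ht : ∀ i, 0 ≤ t i)
    (ha : ∀ i, 0 ≤ a i) (hb : ∀ i, 0 ≤ b i)
    (hW3 : ∑ i, Real.sqrt (s i * t i) ≥ ∑ i, ‖u i‖)
    (hS1 : ∀ i j : Fin 4, i ≠ j →
      min (Real.sqrt (a i * b i)) (Real.sqrt (a j * b j)) ≥
        max ‖z i‖ ‖z j‖) :
    0 ≤ ∑ i, (s i * a i + t i * b i + 2 * (u i * z i).re) := by
  obtain ⟨M, hzM, hM⟩ := exists_forall_le_and_forall_ge (le_of_pairwise_max_le_min hS1)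
  have hM0 : 0 ≤ M := (norm_nonneg _).trans (hzM 0)
  calc 0 ≤ 2 * M * (∑ i, √(s i * t i) - ∑ i, ‖u i‖) := by
        have := sub_nonneg.mpr hW3
        positivity
    _ = ∑ i, 2 * M * (√(s i * t i) - ‖u i‖) := by rw [← sum_sub_distrib, mul_sum]
    _ ≤ ∑ i, (s i * a i + t i * b i + 2 * (u i * z i).re) :=
        sum_le_sum fun i _ => mul_sub_norm_le_pairing (hs i) (ht i) (ha i) (hb i) (hzM i) (hM i)
end

section
/- Let a, b ∈ ℝ⁴ be nonnegative with a₄ = b₄ = 0, and z ∈ ℂ⁴ with z₄ = 0, satisfying √(a₁b₁) = √(a₂b₂) = √(a₃b₃) = |z₁| = 1 and z₂ = z₃ = 0. If (a,b,z) = (a',b',z') + (a'',b'',z'') where both summands satisfy |z'ᵢ| ≤ min{√(a'ⱼb'ⱼ), √(a'ₖb'ₖ)} for the pairs required by membership in ℬ ∩ 𝒞 (i.e., S₁[1,3], S₁[2,4], S₁[1,2], S₁[3,4] for each summand, with nonnegative a', b', a'', b''), then (a',b',z') is a nonnegative multiple of (a'',b'',z'') or vice versa. -/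
/-!
Indices below are the paper's, shifted down by one in the code. Since a₄ = b₄ = 0 forces
a'₄ = b'₄ = a''₄ = b''₄ = 0, the conditions S₁[2,4] and S₁[3,4] kill z'₂, z'₃, z'₄ and likewise for z''.
With t = |z'₁| and s = |z''₁| we have t + s ≥ |z₁| = 1, while S₁[1,2] and S₁[1,3] give
t ≤ √(a'ᵢb'ᵢ) and s ≤ √(a''ᵢb''ᵢ) for i = 1, 2, 3. By Cauchy–Schwarz
√(a'ᵢb'ᵢ) + √(a''ᵢb''ᵢ) ≤ √(aᵢbᵢ) = 1, so all these inequalities are equalities, and the equality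
case of Cauchy–Schwarz gives (a'ᵢ, b'ᵢ) = t (aᵢ, bᵢ); strict convexity of ℂ gives z'₁ = t z₁.
So the two summands are t (a, b, z) and (1 - t) (a, b, z).
-/

/-- The inequality `S₁[i,j]` for a triple `(a,b,z)`. -/
def S1 (a b : Fin 4 → ℝ) (z : Fin 4 → ℂ) (i j : Fin 4) : Prop :=
  min (Real.sqrt (a i * b i)) (Real.sqrt (a j * b j)) ≥
    max ‖z i‖ ‖z j‖

theorem add_eq_one_and_sq_eq_of_le_mul {p q m n t s : ℝ} (ht : t ≤ p * m) (hs : s ≤ q * n)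
    (h : (p ^ 2 + q ^ 2) * (m ^ 2 + n ^ 2) = 1) (hts : 1 ≤ t + s) :
    t + s = 1 ∧ p ^ 2 = t * (p ^ 2 + q ^ 2) ∧ m ^ 2 = t * (m ^ 2 + n ^ 2) := by
  have lagrange : (p * m + q * n) ^ 2 + (p * n - q * m) ^ 2 = 1 := by linear_combination h
  have hsum : p * m + q * n = 1 := by nlinarith [sq_nonneg (p * n - q * m)]
  have hcross : p * n = q * m := by nlinarith [sq_nonneg (p * n - q * m)]
  have hpm : p * m = t := by linarith
  refine ⟨by linarith, ?_, ?_⟩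
  · rw [← hpm]; linear_combination (p * q) * hcross - p ^ 2 * hsum
  · rw [← hpm]; linear_combination -(m * n) * hcross - m ^ 2 * hsum

theorem add_eq_one_and_eq_mul_of_le_sqrt_mul {x y u v t s : ℝ} (hx : 0 ≤ x) (hy : 0 ≤ y)
    (hu : 0 ≤ u) (hv : 0 ≤ v) (ht : t ≤ √(x * y)) (hs : s ≤ √(u * v))
    (h : √((x + u) * (y + v)) = 1) (hts : 1 ≤ t + s) :
    t + s = 1 ∧ x = t * (x + u) ∧ y = t * (y + v) := by
  rw [Real.sqrt_mul hx] at ht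
  rw [Real.sqrt_mul hu] at hs
  have := add_eq_one_and_sq_eq_of_le_mul ht hs (by
    rwa [Real.sq_sqrt hx, Real.sq_sqrt hy, Real.sq_sqrt hu, Real.sq_sqrt hv, ← Real.sqrt_eq_one]) hts
  simpa only [Real.sq_sqrt hx, Real.sq_sqrt hy, Real.sq_sqrt hu, Real.sq_sqrt hv] using this

theorem eq_norm_smul_add_of_norm_add_eq {E : Type*} [NormedAddCommGroup E] [NormedSpace ℝ E]
    [StrictConvexSpace ℝ E] {x y : E} (h : ‖x + y‖ = ‖x‖ + ‖y‖) :
    ‖x + y‖ • x = ‖x‖ • (x + y) := by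
  rw [h, add_smul, smul_add, (sameRay_iff_norm_add.mpr h).norm_smul_eq]

theorem exists_nonneg_smul_of_eq_smul_add {K M : Type*} [Field K] [LinearOrder K]
    [IsStrictOrderedRing K] [AddCommGroup M] [Module K M] {x y : M} {t : K}
    (ht₀ : 0 ≤ t) (ht₁ : t ≤ 1) (h : x = t • (x + y)) :
    ∃ c : K, 0 ≤ c ∧ (x = c • y ∨ y = c • x) := by
  have hxy : (1 - t) • x = t • y := by
    rw [sub_smul, one_smul, sub_eq_iff_eq_add, ← smul_add, add_comm y, ← h]
  rcases ht₁.eq_or_lt with rfl | ht₁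
  · refine ⟨0, le_rfl, .inr ?_⟩
    simpa using hxy.symm
  · have h1t : (1 - t) ≠ 0 := (sub_pos.mpr ht₁).ne'
    refine ⟨t / (1 - t), div_nonneg ht₀ (sub_pos.mpr ht₁).le, .inl ?_⟩
    rw [div_eq_inv_mul, mul_smul, ← hxy, inv_smul_smul₀ h1t]

theorem S1.norm_le_sqrt {a b : Fin 4 → ℝ} {z : Fin 4 → ℂ} {i j k l : Fin 4} (h : S1 a b z i j)
    (hk : k = i ∨ k = j) (hl : l = i ∨ l = j) : ‖z k‖ ≤ √(a l * b l) := by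
  simp only [S1, ge_iff_le, le_min_iff, max_le_iff] at h
  rcases hk with rfl | rfl <;> rcases hl with rfl | rfl <;> tauto

theorem S1.eq_zero_of_right_eq_zero {a b : Fin 4 → ℝ} {z : Fin 4 → ℂ} {i j : Fin 4}
    (h : S1 a b z i j) (hj : a j = 0) : z i = 0 ∧ z j = 0 := by
  have hzero : √(a j * b j) = 0 := by simp [hj]
  exact ⟨norm_le_zero_iff.mp (hzero ▸ h.norm_le_sqrt (.inl rfl) (.inr rfl)),
    norm_le_zero_iff.mp (hzero ▸ h.norm_le_sqrt (.inr rfl) (.inr rfl))⟩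

theorem extreme_S2e14_in_BC_general (a b a' b' a'' b'' : Fin 4 → ℝ) (z z' z'' : Fin 4 → ℂ)
    (ha4 : a 3 = 0) (hb4 : b 3 = 0)
    (h1 : Real.sqrt (a 0 * b 0) = 1) (h2 : Real.sqrt (a 1 * b 1) = 1)
    (h3 : Real.sqrt (a 2 * b 2) = 1) (hz1 : ‖z 0‖ = 1)
    (ha' : ∀ i, 0 ≤ a' i) (hb' : ∀ i, 0 ≤ b' i)
    (ha'' : ∀ i, 0 ≤ a'' i) (hb'' : ∀ i, 0 ≤ b'' i)
    (hsum : a = a' + a'' ∧ b = b' + b'' ∧ z = z' + z'')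
    (hB' : S1 a' b' z' 0 2 ∧ S1 a' b' z' 1 3)
    (hC' : S1 a' b' z' 0 1 ∧ S1 a' b' z' 2 3)
    (hB'' : S1 a'' b'' z'' 0 2 ∧ S1 a'' b'' z'' 1 3)
    (hC'' : S1 a'' b'' z'' 0 1 ∧ S1 a'' b'' z'' 2 3) :
    ∃ c : ℝ, 0 ≤ c ∧
      ((a' = c • a'' ∧ b' = c • b'' ∧ z' = (c : ℝ) • z'') ∨
       (a'' = c • a' ∧ b'' = c • b' ∧ z'' = (c : ℝ) • z')) := by
  obtain ⟨rfl, rfl, rfl⟩ := hsum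
  obtain ⟨ha'3, ha''3⟩ := (add_eq_zero_iff_of_nonneg (ha' 3) (ha'' 3)).mp ha4
  obtain ⟨hb'3, hb''3⟩ := (add_eq_zero_iff_of_nonneg (hb' 3) (hb'' 3)).mp hb4
  obtain ⟨hz'1, -⟩ := hB'.2.eq_zero_of_right_eq_zero ha'3
  obtain ⟨hz'2, hz'3⟩ := hC'.2.eq_zero_of_right_eq_zero ha'3
  obtain ⟨hz''1, -⟩ := hB''.2.eq_zero_of_right_eq_zero ha''3
  obtain ⟨hz''2, hz''3⟩ := hC''.2.eq_zero_of_right_eq_zero ha''3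
  set t := ‖z' 0‖
  have hts : 1 ≤ t + ‖z'' 0‖ := hz1 ▸ norm_add_le _ _
  have tight_at := fun i ht hs h ↦
    add_eq_one_and_eq_mul_of_le_sqrt_mul (ha' i) (hb' i) (ha'' i) (hb'' i) ht hs h hts
  obtain ⟨ht_add, ha'0, hb'0⟩ := tight_at 0 (hC'.1.norm_le_sqrt (.inl rfl) (.inl rfl))
    (hC''.1.norm_le_sqrt (.inl rfl) (.inl rfl)) h1
  obtain ⟨-, ha'1, hb'1⟩ := tight_at 1 (hC'.1.norm_le_sqrt (.inl rfl) (.inr rfl))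
    (hC''.1.norm_le_sqrt (.inl rfl) (.inr rfl)) h2
  obtain ⟨-, ha'2, hb'2⟩ := tight_at 2 (hB'.1.norm_le_sqrt (.inl rfl) (.inr rfl))
    (hB''.1.norm_le_sqrt (.inl rfl) (.inr rfl)) h3
  have hz'0 : z' 0 = t • (z' 0 + z'' 0) := by
    have := eq_norm_smul_add_of_norm_add_eq (hz1.trans ht_add.symm)
    rwa [show ‖z' 0 + z'' 0‖ = 1 from hz1, one_smul] at this
  have hsmul : (a', b', z') = t • ((a', b', z') + (a'', b'', z'')) := by
    simp only [Prod.smul_mk, Prod.mk_add_mk, Prod.mk.injEq]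
    refine ⟨funext fun i ↦ ?_, funext fun i ↦ ?_, funext fun i ↦ ?_⟩ <;>
      fin_cases i <;>
      first | assumption | simp [ha'3, ha''3, hb'3, hb''3, hz'1, hz'2, hz'3, hz''1, hz''2, hz''3]
  obtain ⟨c, hc, h | h⟩ := exists_nonneg_smul_of_eq_smul_add (norm_nonneg _)
    (by linarith [norm_nonneg (z'' 0)]) hsmul
  exacts [⟨c, hc, .inl (by simpa only [Prod.smul_mk, Prod.mk.injEq] using h)⟩,
    ⟨c, hc, .inr (by simpa only [Prod.smul_mk, Prod.mk.injEq] using h)⟩]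

theorem extreme_S2e14_in_BC (a b a' b' a'' b'' : Fin 4 → ℝ) (z z' z'' : Fin 4 → ℂ)
    (ha : ∀ i, 0 ≤ a i) (hb : ∀ i, 0 ≤ b i)
    (ha4 : a 3 = 0) (hb4 : b 3 = 0) (hz4 : z 3 = 0)
    (h1 : Real.sqrt (a 0 * b 0) = 1) (h2 : Real.sqrt (a 1 * b 1) = 1)
    (h3 : Real.sqrt (a 2 * b 2) = 1) (hz1 : ‖z 0‖ = 1)
    (hz2 : z 1 = 0) (hz3 : z 2 = 0)
    (ha' : ∀ i, 0 ≤ a' i) (hb' : ∀ i, 0 ≤ b' i)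
    (ha'' : ∀ i, 0 ≤ a'' i) (hb'' : ∀ i, 0 ≤ b'' i)
    (hsum : a = a' + a'' ∧ b = b' + b'' ∧ z = z' + z'')
    (hB' : S1 a' b' z' 0 2 ∧ S1 a' b' z' 1 3)
    (hC' : S1 a' b' z' 0 1 ∧ S1 a' b' z' 2 3)
    (hB'' : S1 a'' b'' z'' 0 2 ∧ S1 a'' b'' z'' 1 3)
    (hC'' : S1 a'' b'' z'' 0 1 ∧ S1 a'' b'' z'' 2 3) :
    ∃ c : ℝ, 0 ≤ c ∧
      ((a' = c • a'' ∧ b' = c • b'' ∧ z' = (c : ℝ) • z'') ∨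
       (a'' = c • a' ∧ b'' = c • b' ∧ z'' = (c : ℝ) • z')) :=
  extreme_S2e14_in_BC_general a b a' b' a'' b'' z z' z'' ha4 hb4 h1 h2 h3 hz1 ha' hb' ha'' hb'' hsum
    hB' hC' hB'' hC''
end

section
/- Let a, b ∈ ℝ⁴ be nonnegative and z ∈ ℂ⁴ with √(a₁b₁) = √(a₄b₄) = |z₁| = |z₄| = 1 and a₂ = a₃ = b₂ = b₃ = 0, z₂ = z₃ = 0. Suppose (a,b,z) = (a',b',z') + (a'',b'',z'') where both summands have nonnegative a-, b-components and satisfy S₁[1,4] and S₁[2,3] (i.e., min{√(a₁b₁),√(a₄b₄)} ≥ max{|z₁|,|z₄|} and min{√(a₂b₂),√(a₃b₃)} ≥ max{|z₂|,|z₃|}). Then one summand is a nonnegative multiple of the other. -/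
open Real

section CauchySchwarz

variable {A' B' A'' B'' : ℝ}

/-- Lagrange's identity for the vectors `(√A', √A'')` and `(√B', √B'')`. -/
theorem add_mul_add_eq_sq_add_sq_sqrt (hA' : 0 ≤ A') (hB' : 0 ≤ B') (hA'' : 0 ≤ A'')
    (hB'' : 0 ≤ B'') :
    (A' + A'') * (B' + B'') =
      (√(A' * B') + √(A'' * B'')) ^ 2 + (√(A' * B'') - √(A'' * B')) ^ 2 := by
  have hcross : √(A' * B') * √(A'' * B'') = √(A' * B'') * √(A'' * B') := by
    rw [← sqrt_mul (by positivity), ← sqrt_mul (by positivity)]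
    ring_nf
  linear_combination -(sq_sqrt (mul_nonneg hA' hB')) - sq_sqrt (mul_nonneg hA'' hB'')
    - sq_sqrt (mul_nonneg hA' hB'') - sq_sqrt (mul_nonneg hA'' hB') - 2 * hcross

theorem norm_eq_sqrt_of_sqrt_le_norm_add {E : Type*} [NormedAddCommGroup E] [NormedSpace ℝ E]
    [StrictConvexSpace ℝ E] {Z' Z'' : E} (hA' : 0 ≤ A') (hB' : 0 ≤ B') (hA'' : 0 ≤ A'')
    (hB'' : 0 ≤ B'') (hle : √((A' + A'') * (B' + B'')) ≤ ‖Z' + Z''‖)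
    (h' : ‖Z'‖ ≤ √(A' * B')) (h'' : ‖Z''‖ ≤ √(A'' * B'')) :
    ‖Z'‖ = √(A' * B') ∧ ‖Z''‖ = √(A'' * B'') ∧ A' * B'' = A'' * B' ∧ SameRay ℝ Z' Z'' := by
  have hid := add_mul_add_eq_sq_add_sq_sqrt hA' hB' hA'' hB''
  set s := √(A' * B') + √(A'' * B'')
  set d := √(A' * B'') - √(A'' * B')
  have hs : s ≤ √((A' + A'') * (B' + B'')) :=
    le_sqrt_of_sq_le (by rw [hid]; exact le_add_of_nonneg_right (sq_nonneg d))
  have htri := norm_add_le Z' Z''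
  have hs_eq : s ^ 2 = (A' + A'') * (B' + B'') := by
    rw [show s = √((A' + A'') * (B' + B'')) by linarith, sq_sqrt (by positivity)]
  have hd : d = 0 := pow_eq_zero_iff two_ne_zero |>.1 (by linarith)
  refine ⟨by linarith, by linarith, ?_, sameRay_iff_norm_add.2 (by linarith)⟩
  rw [← sq_sqrt (mul_nonneg hA' hB''), ← sq_sqrt (mul_nonneg hA'' hB'), sub_eq_zero.1 hd]

theorem eq_mul_of_mul_eq_mul {c : ℝ} (hA' : 0 ≤ A') (hA'' : 0 ≤ A'') (hB'' : 0 ≤ B'') (hc : 0 ≤ c)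
    (hpos : 0 < A'' * B'') (hcross : A' * B'' = A'' * B') (hprod : A' * B' = c ^ 2 * (A'' * B'')) :
    A' = c * A'' ∧ B' = c * B'' := by
  have hA''pos : 0 < A'' := hA''.lt_of_ne (by rintro rfl; simp at hpos)
  have hB''pos : 0 < B'' := hB''.lt_of_ne (by rintro rfl; simp at hpos)
  have hsq : (A' * B'') ^ 2 = (c * (A'' * B'')) ^ 2 := by
    linear_combination (A' * B'') * hcross + (A'' * B'') * hprod
  have hAB : A' * B'' = c * (A'' * B'') :=
    (pow_left_inj₀ (by positivity) (by positivity) two_ne_zero).1 hsq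
  exact ⟨mul_right_cancel₀ hB''pos.ne' (by linear_combination hAB),
    mul_left_cancel₀ hA''pos.ne' (by linear_combination -hcross + hAB)⟩

end CauchySchwarz

theorem SameRay.eq_div_norm_smul {F : Type*} [NormedAddCommGroup F] [NormedSpace ℝ F] {x y : F}
    (h : SameRay ℝ x y) (hy : y ≠ 0) : x = (‖x‖ / ‖y‖) • y := by
  rw [div_eq_inv_mul, mul_smul, h.norm_smul_eq, inv_smul_smul₀ (norm_ne_zero_iff.2 hy)]

theorem eq_div_norm_smul_of_norm_eq_sqrt {E : Type*} [NormedAddCommGroup E] [NormedSpace ℝ E]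
    {A' B' A'' B'' : ℝ} {Z' Z'' : E} (hA' : 0 ≤ A') (hB' : 0 ≤ B') (hA'' : 0 ≤ A'')
    (hB'' : 0 ≤ B'') (h' : ‖Z'‖ = √(A' * B')) (h'' : ‖Z''‖ = √(A'' * B''))
    (hcross : A' * B'' = A'' * B') (hray : SameRay ℝ Z' Z'') (hZ'' : Z'' ≠ 0) :
    A' = ‖Z'‖ / ‖Z''‖ * A'' ∧ B' = ‖Z'‖ / ‖Z''‖ * B'' ∧ Z' = (‖Z'‖ / ‖Z''‖) • Z'' := by
  have hn'' : 0 < ‖Z''‖ := norm_pos_iff.2 hZ''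
  have hsq' : A' * B' = ‖Z'‖ ^ 2 := by rw [h', sq_sqrt (mul_nonneg hA' hB')]
  have hsq'' : A'' * B'' = ‖Z''‖ ^ 2 := by rw [h'', sq_sqrt (mul_nonneg hA'' hB'')]
  have hprop := eq_mul_of_mul_eq_mul (c := ‖Z'‖ / ‖Z''‖) hA' hA'' hB'' (by positivity)
    (by rw [hsq'']; positivity) hcross
    (by rw [hsq', hsq'', div_pow, div_mul_cancel₀ _ (by positivity)])
  exact ⟨hprop.1, hprop.2, hray.eq_div_norm_smul hZ''⟩

namespace S1

variable {a b : Fin 4 → ℝ} {z : Fin 4 → ℂ} {i j k l : Fin 4}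

theorem norm_le (h : S1 a b z i j) (hk : k = i ∨ k = j) (hl : l = i ∨ l = j) :
    ‖z k‖ ≤ √(a l * b l) :=
  calc ‖z k‖ ≤ max ‖z i‖ ‖z j‖ := by rcases hk with rfl | rfl <;> simp
    _ ≤ min √(a i * b i) √(a j * b j) := h
    _ ≤ √(a l * b l) := by rcases hl with rfl | rfl <;> simp

theorem eq_zero_of_mul_eq_zero (h : S1 a b z i j) (hk : k = i ∨ k = j) (hab : a k * b k = 0) :
    z k = 0 :=
  norm_le_zero_iff.1 (by simpa [hab] using h.norm_le hk hk)

theorem norm_eq_of_norm_eq_sqrt (h : S1 a b z i j) (hi : ‖z i‖ = √(a i * b i))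
    (hj : ‖z j‖ = √(a j * b j)) : ‖z j‖ = ‖z i‖ :=
  le_antisymm ((h.norm_le (.inr rfl) (.inl rfl)).trans hi.ge)
    ((h.norm_le (.inl rfl) (.inr rfl)).trans hj.ge)

end S1

theorem eq_smul_of_S1_of_norm_eq_sqrt {a' b' a'' b'' : Fin 4 → ℝ} {z' z'' : Fin 4 → ℂ}
    (ha' : ∀ i, 0 ≤ a' i) (hb' : ∀ i, 0 ≤ b' i) (ha'' : ∀ i, 0 ≤ a'' i) (hb'' : ∀ i, 0 ≤ b'' i)
    (hS' : S1 a' b' z' 0 3) (hS'' : S1 a'' b'' z'' 0 3)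
    (htight' : ∀ i, i = 0 ∨ i = 3 → ‖z' i‖ = √(a' i * b' i))
    (htight'' : ∀ i, i = 0 ∨ i = 3 → ‖z'' i‖ = √(a'' i * b'' i))
    (hpair : ∀ i, i = 0 ∨ i = 3 → a' i * b'' i = a'' i * b' i ∧ SameRay ℝ (z' i) (z'' i))
    (hzero' : ∀ i, i = 1 ∨ i = 2 → a' i = 0 ∧ b' i = 0 ∧ z' i = 0)
    (hzero'' : ∀ i, i = 1 ∨ i = 2 → a'' i = 0 ∧ b'' i = 0 ∧ z'' i = 0) (hz'' : z'' 0 ≠ 0) :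
    a' = (‖z' 0‖ / ‖z'' 0‖) • a'' ∧ b' = (‖z' 0‖ / ‖z'' 0‖) • b'' ∧
      z' = (‖z' 0‖ / ‖z'' 0‖) • z'' := by
  have hnorm' := hS'.norm_eq_of_norm_eq_sqrt (htight' 0 (by simp)) (htight' 3 (by simp))
  have hnorm'' := hS''.norm_eq_of_norm_eq_sqrt (htight'' 0 (by simp)) (htight'' 3 (by simp))
  have houter (i) (hi : i = 0 ∨ i = 3) (hz''i : z'' i ≠ 0) := eq_div_norm_smul_of_norm_eq_sqrt
    (ha' i) (hb' i) (ha'' i) (hb'' i) (htight' i hi) (htight'' i hi) (hpair i hi).1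
    (hpair i hi).2 hz''i
  have hcoord : ∀ i, a' i = ‖z' 0‖ / ‖z'' 0‖ * a'' i ∧ b' i = ‖z' 0‖ / ‖z'' 0‖ * b'' i ∧
      z' i = (‖z' 0‖ / ‖z'' 0‖) • z'' i := by
    intro i
    fin_cases i
    · exact houter 0 (by simp) hz''
    · simp [hzero' 1 (by simp), hzero'' 1 (by simp)]
    · simp [hzero' 2 (by simp), hzero'' 2 (by simp)]
    · rw [← hnorm', ← hnorm'']
      exact houter 3 (by simp) (norm_ne_zero_iff.1 (hnorm''.trans_ne (norm_ne_zero_iff.2 hz'')))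
  exact ⟨funext fun i => (hcoord i).1, funext fun i => (hcoord i).2.1,
    funext fun i => (hcoord i).2.2⟩

theorem extreme_S1e14_in_A_general (a b a' b' a'' b'' : Fin 4 → ℝ) (z z' z'' : Fin 4 → ℂ)
    (h1 : Real.sqrt (a 0 * b 0) = 1) (h4 : Real.sqrt (a 3 * b 3) = 1)
    (hz1 : ‖z 0‖ = 1) (hz4 : ‖z 3‖ = 1)
    (ha2 : a 1 = 0) (ha3 : a 2 = 0) (hb2 : b 1 = 0) (hb3 : b 2 = 0)
    (ha' : ∀ i, 0 ≤ a' i) (hb' : ∀ i, 0 ≤ b' i)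
    (ha'' : ∀ i, 0 ≤ a'' i) (hb'' : ∀ i, 0 ≤ b'' i)
    (hsum : a = a' + a'' ∧ b = b' + b'' ∧ z = z' + z'')
    (hA' : S1 a' b' z' 0 3 ∧ S1 a' b' z' 1 2)
    (hA'' : S1 a'' b'' z'' 0 3 ∧ S1 a'' b'' z'' 1 2) :
    ∃ c : ℝ, 0 ≤ c ∧
      ((a' = c • a'' ∧ b' = c • b'' ∧ z' = (c : ℝ) • z'') ∨
       (a'' = c • a' ∧ b'' = c • b' ∧ z'' = (c : ℝ) • z')) := by
  obtain ⟨rfl, rfl, rfl⟩ := hsum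
  have hinner (i) (hi : i = 1 ∨ i = 2) : (a' i = 0 ∧ a'' i = 0) ∧ (b' i = 0 ∧ b'' i = 0) := by
    refine ⟨(add_eq_zero_iff_of_nonneg (ha' i) (ha'' i)).1 ?_,
      (add_eq_zero_iff_of_nonneg (hb' i) (hb'' i)).1 ?_⟩ <;> rcases hi with rfl | rfl
    exacts [ha2, ha3, hb2, hb3]
  have houter (i) (hi : i = 0 ∨ i = 3) := norm_eq_sqrt_of_sqrt_le_norm_add (ha' i) (hb' i)
    (ha'' i) (hb'' i) (by rcases hi with rfl | rfl; exacts [(h1.trans hz1.symm).le,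
      (h4.trans hz4.symm).le]) (hA'.1.norm_le hi hi) (hA''.1.norm_le hi hi)
  have hzero' (i) (hi : i = 1 ∨ i = 2) : a' i = 0 ∧ b' i = 0 ∧ z' i = 0 :=
    ⟨(hinner i hi).1.1, (hinner i hi).2.1,
      hA'.2.eq_zero_of_mul_eq_zero hi (by simp [(hinner i hi).1.1])⟩
  have hzero'' (i) (hi : i = 1 ∨ i = 2) : a'' i = 0 ∧ b'' i = 0 ∧ z'' i = 0 :=
    ⟨(hinner i hi).1.2, (hinner i hi).2.2,
      hA''.2.eq_zero_of_mul_eq_zero hi (by simp [(hinner i hi).1.2])⟩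
  have hne : z'' 0 ≠ 0 ∨ z' 0 ≠ 0 := by
    by_contra! h
    simp [h.1, h.2] at hz1
  rcases hne with h | h
  · exact ⟨_, by positivity, .inl <| eq_smul_of_S1_of_norm_eq_sqrt ha' hb' ha'' hb'' hA'.1 hA''.1
      (fun i hi => (houter i hi).1) (fun i hi => (houter i hi).2.1)
      (fun i hi => (houter i hi).2.2) hzero' hzero'' h⟩
  · exact ⟨_, by positivity, .inr <| eq_smul_of_S1_of_norm_eq_sqrt ha'' hb'' ha' hb' hA''.1 hA'.1
      (fun i hi => (houter i hi).2.1) (fun i hi => (houter i hi).1)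
      (fun i hi => ⟨(houter i hi).2.2.1.symm, (houter i hi).2.2.2.symm⟩) hzero'' hzero' h⟩

theorem extreme_S1e14_in_A (a b a' b' a'' b'' : Fin 4 → ℝ) (z z' z'' : Fin 4 → ℂ)
    (ha : ∀ i, 0 ≤ a i) (hb : ∀ i, 0 ≤ b i)
    (h1 : Real.sqrt (a 0 * b 0) = 1) (h4 : Real.sqrt (a 3 * b 3) = 1)
    (hz1 : ‖z 0‖ = 1) (hz4 : ‖z 3‖ = 1)
    (ha2 : a 1 = 0) (ha3 : a 2 = 0) (hb2 : b 1 = 0) (hb3 : b 2 = 0)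
    (hz2 : z 1 = 0) (hz3 : z 2 = 0)
    (ha' : ∀ i, 0 ≤ a' i) (hb' : ∀ i, 0 ≤ b' i)
    (ha'' : ∀ i, 0 ≤ a'' i) (hb'' : ∀ i, 0 ≤ b'' i)
    (hsum : a = a' + a'' ∧ b = b' + b'' ∧ z = z' + z'')
    (hA' : S1 a' b' z' 0 3 ∧ S1 a' b' z' 1 2)
    (hA'' : S1 a'' b'' z'' 0 3 ∧ S1 a'' b'' z'' 1 2) :
    ∃ c : ℝ, 0 ≤ c ∧
      ((a' = c • a'' ∧ b' = c • b'' ∧ z' = (c : ℝ) • z'') ∨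
       (a'' = c • a' ∧ b'' = c • b' ∧ z'' = (c : ℝ) • z')) :=
  extreme_S1e14_in_A_general a b a' b' a'' b'' z z' z'' h1 h4 hz1 hz4 ha2 ha3 hb2 hb3 ha' hb' ha''
    hb'' hsum hA' hA''
end
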